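/- arXiv:1402.4317 — 3 statements merged into one kernel-verified Lean document; each statement's English description precedes it below -/
import Mathlib

section
/- For every m > 0, the function H_m is strictly increasing on [r₀(m), 3m] and strictly decreasing on [3m, ∞), attains its maximum value (2/(3m))√(1/3 + 9m²) at r = 3m, and H_m(r) → 2 as r → ∞. In particular, H_m restricted to [3m, ∞) is a strictly decreasing bijection onto the interval (2, (2/(3m))√(1/3 + 9m²)], so for every ℓ in (2, (2/(3m))√(1/3 + 9m²)) there is a unique r > 3m with H_m(r) = ℓ, and this r tends to ∞ as ℓ → 2⁺. -/
/-!
For `r > 0` we have `H_m(r)² = 4 + 4/r² - 8m/r³`, and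
`a³b³ (H_m(b)² - H_m(a)²) = 4 (b - a) (2m(a² + ab + b²) - ab(a + b))`, whose last factor is
positive for `0 < a < b ≤ 3m` and negative for `3m ≤ a < b`; this gives the monotonicity,
and `H_m(r)² → 4`. The bijection onto `(2, H_m(3m)]` and the escape of its inverse to `∞`
as `ℓ → 2⁺` hold for any continuous, strictly decreasing function on `[c, ∞)` with a limit
at `∞`.
-/

open Filter Set Topology

/-- The mean curvature `H_m(r) = (2/r)√(1 + r² − 2m/r)` of the coordinate sphere `S_r`
in the Schwarzschild anti-de Sitter space of mass `m`. -/
noncomputable def Hm (m r : ℝ) : ℝ := (2 / r) * Real.sqrt (1 + r ^ 2 - 2 * m / r)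

section StrictAntiOnIci

variable {α β : Type*} [LinearOrder β] [TopologicalSpace β] [OrderClosedTopology β]
  {c : α} {L : β}

theorem StrictAntiOn.lt_of_tendsto_atTop [LinearOrder α] [NoMaxOrder α] {f : α → β}
    (hf : StrictAntiOn f (Ici c)) (hlim : Tendsto f atTop (𝓝 L)) {r : α} (hr : c ≤ r) :
    L < f r := by
  have : Nonempty α := ⟨c⟩
  obtain ⟨s, hrs⟩ := exists_gt r
  have hLs : L ≤ f s := le_of_tendsto hlim <| (eventually_ge_atTop s).mono fun t hst ↦
    hf.antitoneOn (hr.trans hrs.le) (hr.trans (hrs.le.trans hst)) hst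
  exact hLs.trans_lt (hf hr (hr.trans hrs.le) hrs)

theorem StrictAntiOn.exists_gt_forall_lt_imp_lt [LinearOrder α] [NoMaxOrder α] {f : α → β}
    (hf : StrictAntiOn f (Ici c)) (hlim : Tendsto f atTop (𝓝 L)) (K : α) :
    ∃ ε, L < ε ∧ ∀ r, c ≤ r → f r < ε → K < r := by
  refine ⟨f (max c K), hf.lt_of_tendsto_atTop hlim (le_max_left c K), fun r hr hrε ↦ ?_⟩
  by_contra! hrK
  exact (hf.antitoneOn hr (le_max_left c K) (hrK.trans (le_max_right c K))).not_gt hrε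

variable [ConditionallyCompleteLinearOrder α] [DenselyOrdered α] [NoMaxOrder α]
  [TopologicalSpace α] [OrderTopology α] {f : α → β}

theorem StrictAntiOn.bijOn_Ici_Ioc (hf : StrictAntiOn f (Ici c))
    (hcont : ContinuousOn f (Ici c)) (hlim : Tendsto f atTop (𝓝 L)) :
    BijOn f (Ici c) (Ioc L (f c)) := by
  refine ⟨fun r hr ↦ ⟨hf.lt_of_tendsto_atTop hlim hr, hf.antitoneOn self_mem_Ici hr hr⟩,
    hf.injOn, fun y hy ↦ ?_⟩
  obtain ⟨b, hby, hcb⟩ := ((hlim.eventually_lt_const hy.1).and (eventually_ge_atTop c)).exists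
  obtain ⟨r, hr, rfl⟩ := intermediate_value_Icc' hcb (hcont.mono Icc_subset_Ici_self)
    ⟨hby.le, hy.2⟩
  exact ⟨r, hr.1, rfl⟩

theorem StrictAntiOn.existsUnique_gt_eq (hf : StrictAntiOn f (Ici c))
    (hcont : ContinuousOn f (Ici c)) (hlim : Tendsto f atTop (𝓝 L)) {ℓ : β} (hLℓ : L < ℓ)
    (hℓc : ℓ < f c) : ∃! r, c < r ∧ f r = ℓ := by
  obtain ⟨r, hr, rfl⟩ := (hf.bijOn_Ici_Ioc hcont hlim).surjOn ⟨hLℓ, hℓc.le⟩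
  refine ⟨r, ⟨lt_of_le_of_ne hr ?_, rfl⟩, fun s hs ↦ hf.injOn (mem_Ici.2 hs.1.le) hr hs.2⟩
  rintro rfl
  exact hℓc.false

end StrictAntiOnIci

/-- Equal to `Hm m r ^ 2` for `r > 0`. -/
noncomputable def HmSq (m r : ℝ) : ℝ := 4 + 4 / r ^ 2 - 8 * m / r ^ 3

section HmSq

variable {m r a b : ℝ}

theorem Hm_eq_sqrt_HmSq (hr : 0 < r) : Hm m r = √(HmSq m r) := by
  rw [Hm, HmSq, show 4 + 4 / r ^ 2 - 8 * m / r ^ 3 = (2 / r) ^ 2 * (1 + r ^ 2 - 2 * m / r) by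
      field_simp; ring, Real.sqrt_mul (sq_nonneg _), Real.sqrt_sq (by positivity)]

theorem HmSq_eq (hr : r ≠ 0) : HmSq m r = 4 * (r ^ 3 + r - 2 * m) / r ^ 3 := by
  rw [HmSq]; field_simp; ring

theorem HmSq_nonneg (hr : 0 < r) (h : 2 * m ≤ r ^ 3 + r) : 0 ≤ HmSq m r := by
  rw [HmSq_eq hr.ne']
  exact div_nonneg (by linarith) (by positivity)

theorem HmSq_sub_HmSq (ha : a ≠ 0) (hb : b ≠ 0) :
    HmSq m b - HmSq m a =
      4 * (b - a) * (2 * m * (a ^ 2 + a * b + b ^ 2) - a * b * (a + b)) / (a ^ 3 * b ^ 3) := by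
  rw [HmSq, HmSq]; field_simp; ring

theorem strictMonoOn_HmSq : StrictMonoOn (HmSq m) (Ioc 0 (3 * m)) := by
  intro a ⟨ha, _⟩ b ⟨hb, hbm⟩ hab
  rw [← sub_pos, HmSq_sub_HmSq ha.ne' hb.ne']
  -- `2m ≥ 2b/3`, and `(2b/3)(a² + ab + b²) - ab(a + b) = b(b - a)(2b + a)/3`
  have : 0 < 2 * m * (a ^ 2 + a * b + b ^ 2) - a * b * (a + b) := by
    nlinarith [mul_pos (mul_pos hb (sub_pos.2 hab)) (by linarith : 0 < 2 * b + a),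
      mul_nonneg (by linarith : 0 ≤ 6 * m - 2 * b) (by positivity : 0 ≤ a ^ 2 + a * b + b ^ 2)]
  have := sub_pos.2 hab
  positivity

theorem strictAntiOn_HmSq (hm : 0 < m) : StrictAntiOn (HmSq m) (Ici (3 * m)) := by
  intro a ha b _ hab
  have ha0 : 0 < a := by linarith [mem_Ici.1 ha]
  have hb0 : 0 < b := ha0.trans hab
  rw [← sub_pos, ← neg_sub, neg_pos, HmSq_sub_HmSq ha0.ne' hb0.ne']
  -- `2m ≤ 2a/3`, and `ab(a + b) - (2a/3)(a² + ab + b²) = a(b - a)(b + 2a)/3`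
  have : 2 * m * (a ^ 2 + a * b + b ^ 2) - a * b * (a + b) < 0 := by
    nlinarith [mul_pos (mul_pos ha0 (sub_pos.2 hab)) (by linarith : 0 < b + 2 * a),
      mul_nonneg (by linarith [mem_Ici.1 ha] : 0 ≤ 2 * a - 6 * m)
        (by positivity : 0 ≤ a ^ 2 + a * b + b ^ 2)]
  exact div_neg_of_neg_of_pos (mul_neg_of_pos_of_neg (by linarith) this) (by positivity)

theorem tendsto_HmSq_atTop : Tendsto (HmSq m) atTop (𝓝 4) := by
  have h := ((tendsto_const_nhds (x := (4 : ℝ))).add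
    ((tendsto_const_nhds (x := (4 : ℝ))).div_atTop (tendsto_pow_atTop two_ne_zero))).sub
    ((tendsto_const_nhds (x := 8 * m)).div_atTop (tendsto_pow_atTop three_ne_zero))
  unfold HmSq
  simpa only [add_zero, sub_zero] using h

end HmSq

section Hm

variable {m r₀ r : ℝ}

theorem root_lt_three_mul (hr₀ : 0 < r₀) (hroot : r₀ ^ 3 + r₀ = 2 * m) : r₀ < 3 * m := by
  nlinarith [pow_pos hr₀ 3]

theorem strictMonoOn_Hm (hr₀ : 0 < r₀) (hroot : r₀ ^ 3 + r₀ = 2 * m) :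
    StrictMonoOn (Hm m) (Icc r₀ (3 * m)) := by
  intro a ⟨hr₀a, _⟩ b ⟨_, hbm⟩ hab
  have ha : 0 < a := hr₀.trans_le hr₀a
  rw [Hm_eq_sqrt_HmSq ha, Hm_eq_sqrt_HmSq (ha.trans hab)]
  have hroot_le : 2 * m ≤ a ^ 3 + a := by nlinarith [pow_le_pow_left₀ hr₀.le hr₀a 3]
  exact Real.sqrt_lt_sqrt (HmSq_nonneg ha hroot_le)
    (strictMonoOn_HmSq ⟨ha, hab.le.trans hbm⟩ ⟨ha.trans hab, hbm⟩ hab)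

theorem strictAntiOn_Hm (hm : 0 < m) : StrictAntiOn (Hm m) (Ici (3 * m)) := by
  intro a ha b hb hab
  have ha0 : 0 < a := by linarith [mem_Ici.1 ha]
  have hb0 : 0 < b := ha0.trans hab
  rw [Hm_eq_sqrt_HmSq ha0, Hm_eq_sqrt_HmSq hb0]
  exact Real.sqrt_lt_sqrt (HmSq_nonneg hb0 (by linarith [pow_pos hb0 3, mem_Ici.1 hb]))
    (strictAntiOn_HmSq hm ha hb hab)

theorem Hm_le_Hm_three_mul (hm : 0 < m) (hr₀ : 0 < r₀) (hroot : r₀ ^ 3 + r₀ = 2 * m)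
    (hr : r₀ ≤ r) : Hm m r ≤ Hm m (3 * m) := by
  rcases le_total r (3 * m) with h | h
  · exact (strictMonoOn_Hm hr₀ hroot).monotoneOn ⟨hr, h⟩
      ⟨(root_lt_three_mul hr₀ hroot).le, le_rfl⟩ h
  · exact (strictAntiOn_Hm hm).antitoneOn self_mem_Ici h h

theorem Hm_three_mul (hm : m ≠ 0) :
    Hm m (3 * m) = (2 / (3 * m)) * Real.sqrt (1 / 3 + 9 * m ^ 2) := by
  rw [Hm, show 1 + (3 * m) ^ 2 - 2 * m / (3 * m) = 1 / 3 + 9 * m ^ 2 by field_simp; ring]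

theorem continuousAt_Hm (hr : r ≠ 0) : ContinuousAt (Hm m) r := by
  unfold Hm
  fun_prop (disch := assumption)

theorem tendsto_Hm_atTop : Tendsto (Hm m) atTop (𝓝 2) := by
  have h := (Real.continuous_sqrt.tendsto 4).comp (tendsto_HmSq_atTop (m := m))
  have hsqrt : √4 = (2 : ℝ) := by
    rw [show (4 : ℝ) = 2 ^ 2 by norm_num, Real.sqrt_sq zero_le_two]
  rw [hsqrt] at h
  exact h.congr' <| (eventually_gt_atTop 0).mono fun r hr ↦ (Hm_eq_sqrt_HmSq hr).symm

end Hm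

/-- For every `m > 0`, the function `H_m` is strictly increasing on
`[r₀(m), 3m]` and strictly decreasing on `[3m, ∞)`, attains its maximum value
`(2/(3m))√(1/3 + 9m²)` at `r = 3m`, and `H_m(r) → 2` as `r → ∞`.  In particular, `H_m`
restricted to `[3m, ∞)` is a strictly decreasing bijection onto `(2, (2/(3m))√(1/3 + 9m²)]`,
so for every `ℓ ∈ (2, (2/(3m))√(1/3 + 9m²))` there is a unique `r > 3m` with `H_m(r) = ℓ`,
and this `r` tends to `∞` as `ℓ → 2⁺`. -/
theorem penrose_stmt3 (m r₀ : ℝ) (hm : 0 < m) (hr₀ : 0 < r₀)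
    (hroot : r₀ ^ 3 + r₀ = 2 * m) :
    StrictMonoOn (Hm m) (Set.Icc r₀ (3 * m)) ∧
    StrictAntiOn (Hm m) (Set.Ici (3 * m)) ∧
    Hm m (3 * m) = (2 / (3 * m)) * Real.sqrt (1 / 3 + 9 * m ^ 2) ∧
    (∀ r : ℝ, r₀ ≤ r → Hm m r ≤ (2 / (3 * m)) * Real.sqrt (1 / 3 + 9 * m ^ 2)) ∧
    Filter.Tendsto (Hm m) Filter.atTop (nhds 2) ∧
    Set.BijOn (Hm m) (Set.Ici (3 * m))
      (Set.Ioc 2 ((2 / (3 * m)) * Real.sqrt (1 / 3 + 9 * m ^ 2))) ∧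
    (∀ ℓ : ℝ, 2 < ℓ → ℓ < (2 / (3 * m)) * Real.sqrt (1 / 3 + 9 * m ^ 2) →
      ∃! r : ℝ, 3 * m < r ∧ Hm m r = ℓ) ∧
    ∀ K : ℝ, ∃ δ : ℝ, 0 < δ ∧
      ∀ ℓ r : ℝ, 2 < ℓ → ℓ < 2 + δ → 3 * m ≤ r → Hm m r = ℓ → K < r := by
  rw [← Hm_three_mul hm.ne']
  have hanti := strictAntiOn_Hm hm
  have hcont : ContinuousOn (Hm m) (Ici (3 * m)) := fun r hr ↦
    (continuousAt_Hm (by linarith [mem_Ici.1 hr] : 0 < r).ne').continuousWithinAt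
  refine ⟨strictMonoOn_Hm hr₀ hroot, hanti, rfl, fun r ↦ Hm_le_Hm_three_mul hm hr₀ hroot,
    tendsto_Hm_atTop, hanti.bijOn_Ici_Ioc hcont tendsto_Hm_atTop,
    fun ℓ ↦ hanti.existsUnique_gt_eq hcont tendsto_Hm_atTop, fun K ↦ ?_⟩
  obtain ⟨ε, hε, hεK⟩ := hanti.exists_gt_forall_lt_imp_lt tendsto_Hm_atTop K
  exact ⟨ε - 2, by linarith, fun ℓ r _ hℓ hr hrℓ ↦ hεK r hr (by linarith)⟩
end

section
/- For every m > 0 there exist constants C > 0 and R > max(r₀(m), 1) such that for all r ≥ R: |H_m(r) − 2 − 1/r² + 2m/r³| ≤ C/r⁴. In particular H_m(r) = 2 + 1/r² − 2m/r³ + O(r^{−4}) as r → ∞, which corresponds to the expansion H_m(s) = 2 cosh(s)/sinh(s) − 2m/sinh³(s) + O(e^{−5s}) of the mean curvature of coordinate spheres in the radial arclength coordinate. -/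
set_option maxHeartbeats 1000000 in
/-- For every `m > 0` there exist constants `C > 0` and
`R > max(r₀(m), 1)` such that for all `r ≥ R`:
`|H_m(r) − 2 − 1/r² + 2m/r³| ≤ C/r⁴`.  In particular
`H_m(r) = 2 + 1/r² − 2m/r³ + O(r^{−4})` as `r → ∞`.  Here `r₀` is the unique positive
real with `r₀³ + r₀ = 2m`. -/
theorem penrose_stmt11 (m r₀ : ℝ) (hm : 0 < m) (hr₀ : 0 < r₀)
    (hroot : r₀ ^ 3 + r₀ = 2 * m) :
    ∃ C R : ℝ, 0 < C ∧ max r₀ 1 < R ∧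
      ∀ r : ℝ, R ≤ r →
        |Hm m r - 2 - 1 / r ^ 2 + 2 * m / r ^ 3| ≤ C / r ^ 4 := by
  refine ⟨2 * (1/4 + m^2 + m), max r₀ 1 + 2*m + 1, by positivity,
    by nlinarith [le_max_right r₀ 1, hm], ?_⟩
  intro r hr
  have hmax1 : (1:ℝ) ≤ max r₀ 1 := le_max_right r₀ 1
  have hr1 : (1:ℝ) ≤ r := by nlinarith
  have hrm : 2*m ≤ r := by nlinarith
  have hr0 : (0:ℝ) < r := lt_of_lt_of_le one_pos hr1
  obtain ⟨x, hxdef⟩ : ∃ x : ℝ, x = 1 + r^2 - 2*m/r := ⟨_, rfl⟩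
  have hx : 0 ≤ x := by
    have h1 : 2*m/r ≤ 1 := by rw [div_le_one hr0]; nlinarith
    rw [hxdef]; nlinarith [sq_nonneg r]
  obtain ⟨s, hsdef⟩ : ∃ s : ℝ, s = Real.sqrt x := ⟨_, rfl⟩
  have hs0 : 0 ≤ s := hsdef ▸ Real.sqrt_nonneg _
  have hs2 : s^2 = x := hsdef ▸ Real.sq_sqrt hx
  obtain ⟨P, hPdef⟩ : ∃ P : ℝ, P = r + 1/(2*r) - m/r^2 := ⟨_, rfl⟩
  have hPr : r ≤ P := by
    have h1 : m/r^2 ≤ 1/(2*r) := by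
      rw [div_le_div_iff₀ (by positivity) (by positivity)]
      nlinarith
    rw [hPdef]; linarith
  have hsP : 0 < s + P := by linarith
  have key : Hm m r - 2 - 1/r^2 + 2*m/r^3 = (2/r) * (s - P) := by
    rw [Hm, hPdef, hsdef, hxdef]
    field_simp
    ring
  have hdiff : s - P = (x - P^2)/(s + P) := by
    rw [eq_div_iff (ne_of_gt hsP)]
    nlinarith [hs2]
  have hnum : |x - P^2| ≤ (1/4 + m^2 + m) / r^2 := by
    have hx2 : x - P^2 = (m*r - r^2/4 - m^2)/r^4 := by
      rw [hPdef, hxdef]; field_simp; ring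
    have hx3 : (1/4 + m^2 + m)/r^2 = ((1/4 + m^2 + m)*r^2)/r^4 := by
      field_simp
    rw [hx2, hx3, abs_div, abs_of_pos (show (0:ℝ) < r^4 by positivity)]
    have hmr : m*r ≤ m*r^2 := by
      nlinarith [mul_nonneg (mul_pos hm hr0).le (show (0:ℝ) ≤ r - 1 by linarith)]
    have hr2 : (1:ℝ) ≤ r^2 := by nlinarith
    have hm2 : m^2 * 1 ≤ m^2 * r^2 := mul_le_mul_of_nonneg_left hr2 (sq_nonneg m)
    have h3 : 0 < m*r := mul_pos hm hr0
    have h4 : 0 < m*r^2 := by positivity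
    rw [div_le_div_iff_of_pos_right (show (0:ℝ) < r^4 by positivity)]
    have hb : (1/4 + m^2 + m)*r^2 = r^2/4 + m^2*r^2 + m*r^2 := by ring
    rw [abs_le, hb]
    constructor <;> · linarith [sq_nonneg r, sq_nonneg m]
  rw [key, abs_mul, abs_of_pos (show (0:ℝ) < 2/r by positivity), hdiff, abs_div,
    abs_of_pos hsP]
  calc 2/r * (|x - P^2| / (s + P))
      ≤ 2/r * (((1/4 + m^2 + m)/r^2) / r) := by
        gcongr
        linarith
    _ = 2 * (1/4 + m^2 + m) / r^4 := by field_simp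
end

section
/- For every m > 0, the mean curvature along the arclength coordinate, h(s) := H_m(r_m(s)), satisfies: h is differentiable on (0, ∞) with h′(s) = 6m/r_m(s)³ − 2/r_m(s)² = (2/r_m(s)³)(3m − r_m(s)); the one-sided derivative of h at s = 0 exists and equals 3 + 1/r₀(m)², which is strictly positive; and h′(s) > 0 when r_m(s) < 3m while h′(s) < 0 when r_m(s) > 3m. -/
open MeasureTheory

/-- The arclength function `s_m(r) = ∫_{r₀}^{r} (1 + t² − 2m/t)^{−1/2} dt`, the
`g_m`-distance from the coordinate sphere `S_r` to the boundary sphere `S_{r₀}` in the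
Schwarzschild anti-de Sitter space of mass `m`. -/
noncomputable def sm (m r₀ r : ℝ) : ℝ :=
  ∫ t in Set.Ioc r₀ r, (Real.sqrt (1 + t ^ 2 - 2 * m / t))⁻¹

/-!
With `V(r) = 1 + r² − 2m/r = (r − r₀)(r² + r₀ r + r₀² + 1)/r`, the integrand `V^{-1/2}` of `s_m`
has a singularity of order `(r − r₀)^{-1/2}` at `r₀`, so `s_m` is a continuous, strictly
increasing function on `[r₀, ∞)` with `s_m' = V^{-1/2}` on `(r₀, ∞)`. Hence its inverse `r_m` is
continuous with `r_m' = √V(r_m)` for `s > 0`, and the chain rule gives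
`h' = H_m'(r) √V(r) = 6m/r³ − 2/r²`. This expression extends continuously to `s = 0`, where it
equals `6m/r₀³ − 2/r₀² = 3 + 1/r₀²`, which is therefore the one-sided derivative of `h` at `0`.
-/

open Set Filter intervalIntegral
open scoped Topology

section InverseOfStrictMono

variable {f g : ℝ → ℝ} {a b : ℝ}

theorem StrictMonoOn.apply_eq_of_leftInvOn (hf : StrictMonoOn f (Ici a)) (hfa : f a = b)
    (hmaps : MapsTo g (Ici b) (Ici a)) (hinv : LeftInvOn f g (Ici b)) : g b = a :=
  hf.injOn (hmaps self_mem_Ici) self_mem_Ici ((hinv self_mem_Ici).trans hfa.symm)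

theorem Set.LeftInvOn.lt_apply_of_mapsTo_Ici (hinv : LeftInvOn f g (Ici b)) (hfa : f a = b)
    (hmaps : MapsTo g (Ici b) (Ici a)) {s : ℝ} (hs : b < s) :
    a < g s := by
  refine (hmaps hs.le).lt_of_ne fun h => hs.ne ?_
  rw [← hinv hs.le, ← h, hfa]

theorem StrictMonoOn.strictMonoOn_of_leftInvOn (hf : StrictMonoOn f (Ici a))
    (hmaps : MapsTo g (Ici b) (Ici a)) (hinv : LeftInvOn f g (Ici b)) :
    StrictMonoOn g (Ici b) := fun s hs t ht hst => by
  rw [← hf.lt_iff_lt (hmaps hs) (hmaps ht), hinv hs, hinv ht]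
  exact hst

theorem StrictMonoOn.image_Ici_of_leftInvOn (hf : StrictMonoOn f (Ici a)) (hfa : f a = b)
    (hmaps : MapsTo g (Ici b) (Ici a)) (hinv : LeftInvOn f g (Ici b)) :
    g '' Ici b = Ici a := by
  refine hmaps.image_subset.antisymm fun r (hr : a ≤ r) => ?_
  have hfr : f r ∈ Ici b := hfa ▸ hf.monotoneOn self_mem_Ici hr hr
  exact ⟨f r, hfr, hf.injOn (hmaps hfr) hr (hinv hfr)⟩

theorem StrictMonoOn.continuousOn_of_leftInvOn (hf : StrictMonoOn f (Ici a)) (hfa : f a = b)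
    (hmaps : MapsTo g (Ici b) (Ici a)) (hinv : LeftInvOn f g (Ici b)) :
    ContinuousOn g (Ici b) := by
  have hg := hf.strictMonoOn_of_leftInvOn hmaps hinv
  have himage := hf.image_Ici_of_leftInvOn hfa hmaps hinv
  intro s (hs : b ≤ s)
  rcases hs.eq_or_lt with rfl | hs
  · refine hg.continuousWithinAt_right_of_image_mem_nhdsWithin self_mem_nhdsWithin ?_
    rw [himage, hf.apply_eq_of_leftInvOn hfa hmaps hinv]
    exact self_mem_nhdsWithin
  · refine (hg.continuousAt_of_image_mem_nhds (Ici_mem_nhds hs) ?_).continuousWithinAt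
    rw [himage]
    exact Ici_mem_nhds (hinv.lt_apply_of_mapsTo_Ici hfa hmaps hs)

end InverseOfStrictMono

namespace SAdS

/-- The metric of Schwarzschild anti-de Sitter space is `dr²/V(r) + r² g_{S²}`. -/
noncomputable def potential (m r : ℝ) : ℝ := 1 + r ^ 2 - 2 * m / r

variable {m r₀ : ℝ}

theorem potential_eq_of_root (hroot : r₀ ^ 3 + r₀ = 2 * m) {t : ℝ} (ht : t ≠ 0) :
    potential m t = (t - r₀) * (t ^ 2 + r₀ * t + r₀ ^ 2 + 1) / t := by
  rw [potential]
  field_simp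
  linear_combination hroot

theorem potential_pos (hr₀ : 0 < r₀) (hroot : r₀ ^ 3 + r₀ = 2 * m) {t : ℝ} (ht : r₀ < t) :
    0 < potential m t := by
  have ht₀ : 0 < t := hr₀.trans ht
  rw [potential_eq_of_root hroot ht₀.ne']
  have : 0 < t - r₀ := sub_pos.2 ht
  positivity

theorem sub_div_le_potential (hr₀ : 0 < r₀) (hroot : r₀ ^ 3 + r₀ = 2 * m) {t R : ℝ}
    (ht : r₀ < t) (htR : t ≤ R) : (t - r₀) / R ≤ potential m t := by
  have ht₀ : 0 < t := hr₀.trans ht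
  rw [potential_eq_of_root hroot ht₀.ne', div_le_div_iff₀ (ht₀.trans_le htR) ht₀]
  have hq : 1 ≤ t ^ 2 + r₀ * t + r₀ ^ 2 + 1 := by nlinarith
  have h₁ : 0 ≤ (t - r₀) * R := mul_nonneg (sub_nonneg.2 ht.le) (ht₀.le.trans htR)
  calc (t - r₀) * t ≤ (t - r₀) * R := by gcongr
    _ ≤ (t - r₀) * R * (t ^ 2 + r₀ * t + r₀ ^ 2 + 1) := le_mul_of_one_le_right h₁ hq
    _ = (t - r₀) * (t ^ 2 + r₀ * t + r₀ ^ 2 + 1) * R := by ring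

theorem hasDerivAt_potential {r : ℝ} (hr : r ≠ 0) :
    HasDerivAt (potential m) (2 * r + 2 * m / r ^ 2) r := by
  refine (((hasDerivAt_pow 2 r).const_add 1).fun_sub
    ((hasDerivAt_const r (2 * m)).fun_div (hasDerivAt_id r) hr)).congr_deriv ?_
  simp only [id]
  field_simp
  ring

theorem inv_sqrt_potential_le (hr₀ : 0 < r₀) (hroot : r₀ ^ 3 + r₀ = 2 * m) {t R : ℝ}
    (ht : r₀ < t) (htR : t ≤ R) :
    (√(potential m t))⁻¹ ≤ √R * (t - r₀) ^ (-(1 / 2) : ℝ) := by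
  have hR : 0 < R := hr₀.trans (ht.trans_le htR)
  have hdist : 0 < t - r₀ := sub_pos.2 ht
  calc (√(potential m t))⁻¹ ≤ (√((t - r₀) / R))⁻¹ :=
        inv_anti₀ (Real.sqrt_pos.2 (div_pos hdist hR))
          (Real.sqrt_le_sqrt (sub_div_le_potential hr₀ hroot ht htR))
    _ = √R * (t - r₀) ^ (-(1 / 2) : ℝ) := by
        rw [Real.sqrt_div hdist.le, inv_div, div_eq_mul_inv, Real.rpow_neg hdist.le,
          ← Real.sqrt_eq_rpow]

theorem measurable_inv_sqrt_potential : Measurable fun t => (√(potential m t))⁻¹ := by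
  unfold potential
  fun_prop

theorem integrableOn_inv_sqrt_potential (hr₀ : 0 < r₀) (hroot : r₀ ^ 3 + r₀ = 2 * m) (R : ℝ) :
    IntegrableOn (fun t => (√(potential m t))⁻¹) (Ioc r₀ R) := by
  have hsing : IntegrableOn (fun t => (t - r₀) ^ (-(1 / 2) : ℝ)) (Ioc r₀ R) := by
    simpa using ((intervalIntegrable_rpow' (a := 0) (b := R - r₀) (r := -(1 / 2))
      (by norm_num)).comp_sub_right r₀).1
  refine (hsing.const_mul √R).mono' measurable_inv_sqrt_potential.aestronglyMeasurable ?_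
  filter_upwards [ae_restrict_mem measurableSet_Ioc] with t ht
  rw [Real.norm_of_nonneg (inv_nonneg.2 (Real.sqrt_nonneg _))]
  exact inv_sqrt_potential_le hr₀ hroot ht.1 ht.2

theorem intervalIntegrable_inv_sqrt_potential (hr₀ : 0 < r₀) (hroot : r₀ ^ 3 + r₀ = 2 * m)
    {a b : ℝ} (ha : r₀ ≤ a) (hab : a ≤ b) :
    IntervalIntegrable (fun t => (√(potential m t))⁻¹) volume a b :=
  (intervalIntegrable_iff_integrableOn_Ioc_of_le hab).2
    ((integrableOn_inv_sqrt_potential hr₀ hroot b).mono_set (Ioc_subset_Ioc_left ha))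

theorem sm_eq_intervalIntegral {r : ℝ} (hr : r₀ ≤ r) :
    sm m r₀ r = ∫ t in r₀..r, (√(potential m t))⁻¹ :=
  (integral_of_le hr).symm

theorem sm_self : sm m r₀ r₀ = 0 := by
  simp [sm]

theorem strictMonoOn_sm (hr₀ : 0 < r₀) (hroot : r₀ ^ 3 + r₀ = 2 * m) :
    StrictMonoOn (sm m r₀) (Ici r₀) := by
  intro a (ha : r₀ ≤ a) b (hb : r₀ ≤ b) hab
  rw [← sub_pos, sm_eq_intervalIntegral ha, sm_eq_intervalIntegral hb,
    integral_interval_sub_left (intervalIntegrable_inv_sqrt_potential hr₀ hroot le_rfl hb)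
      (intervalIntegrable_inv_sqrt_potential hr₀ hroot le_rfl ha)]
  refine intervalIntegral_pos_of_pos_on
    (intervalIntegrable_inv_sqrt_potential hr₀ hroot ha hab.le) (fun t ht => ?_) hab
  exact inv_pos.2 (Real.sqrt_pos.2 (potential_pos hr₀ hroot (ha.trans_lt ht.1)))

theorem hasDerivAt_sm (hr₀ : 0 < r₀) (hroot : r₀ ^ 3 + r₀ = 2 * m) {r : ℝ} (hr : r₀ < r) :
    HasDerivAt (sm m r₀) (√(potential m r))⁻¹ r := by
  have hcont : ContinuousAt (fun t => (√(potential m t))⁻¹) r :=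
    (hasDerivAt_potential (hr₀.trans hr).ne').continuousAt.sqrt.inv₀
      (Real.sqrt_pos.2 (potential_pos hr₀ hroot hr)).ne'
  refine (integral_hasDerivAt_right
    (intervalIntegrable_inv_sqrt_potential hr₀ hroot le_rfl hr.le)
    measurable_inv_sqrt_potential.stronglyMeasurable.stronglyMeasurableAtFilter
    hcont).congr_of_eventuallyEq ?_
  filter_upwards [Ioi_mem_nhds hr] with x hx
  exact sm_eq_intervalIntegral (le_of_lt hx)

theorem six_mul_div_cube_sub_two_div_sq {r : ℝ} (hr : r ≠ 0) :
    6 * m / r ^ 3 - 2 / r ^ 2 = 2 / r ^ 3 * (3 * m - r) := by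
  field_simp
  ring

theorem hasDerivAt_Hm {r : ℝ} (hV : 0 < potential m r) (hr : r ≠ 0) :
    HasDerivAt (Hm m) ((6 * m / r ^ 3 - 2 / r ^ 2) / √(potential m r)) r := by
  refine (((hasDerivAt_const r 2).fun_div (hasDerivAt_id r) hr).fun_mul
    ((hasDerivAt_potential hr).sqrt hV.ne')).congr_deriv ?_
  have hsq : √(potential m r) ^ 2 = potential m r := Real.sq_sqrt hV.le
  have hsqrt : √(potential m r) ≠ 0 := (Real.sqrt_pos.2 hV).ne'
  simp only [id]
  field_simp
  rw [hsq, potential]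
  field_simp
  ring

theorem continuousAt_Hm {r : ℝ} (hr : r ≠ 0) : ContinuousAt (Hm m) r :=
  (continuousAt_const.div continuousAt_id hr).mul (hasDerivAt_potential hr).continuousAt.sqrt

variable {g : ℝ → ℝ}

theorem hasDerivAt_Hm_comp_of_leftInvOn (hr₀ : 0 < r₀) (hroot : r₀ ^ 3 + r₀ = 2 * m)
    (hmaps : MapsTo g (Ici 0) (Ici r₀)) (hinv : LeftInvOn (sm m r₀) g (Ici 0)) {s : ℝ}
    (hs : 0 < s) : HasDerivAt (fun s => Hm m (g s)) (6 * m / g s ^ 3 - 2 / g s ^ 2) s := by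
  have hr : r₀ < g s := hinv.lt_apply_of_mapsTo_Ici sm_self hmaps hs
  have hV : 0 < potential m (g s) := potential_pos hr₀ hroot hr
  have hcont : ContinuousAt g s :=
    ((strictMonoOn_sm hr₀ hroot).continuousOn_of_leftInvOn sm_self hmaps hinv).continuousAt
      (Ici_mem_nhds hs)
  have hg : HasDerivAt g (√(potential m (g s))) s := by
    simpa using (hasDerivAt_sm hr₀ hroot hr).of_local_left_inverse hcont
      (inv_ne_zero (Real.sqrt_pos.2 hV).ne')
      (eventually_of_mem (Ici_mem_nhds hs) fun _ hy => hinv hy)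
  exact ((hasDerivAt_Hm hV (hr₀.trans hr).ne').comp s hg).congr_deriv
    (div_mul_cancel₀ _ (Real.sqrt_pos.2 hV).ne')

theorem hasDerivWithinAt_Hm_comp_of_leftInvOn (hr₀ : 0 < r₀) (hroot : r₀ ^ 3 + r₀ = 2 * m)
    (hmaps : MapsTo g (Ici 0) (Ici r₀)) (hinv : LeftInvOn (sm m r₀) g (Ici 0)) :
    HasDerivWithinAt (fun s => Hm m (g s)) (3 + 1 / r₀ ^ 2) (Ici 0) 0 := by
  have hsm := strictMonoOn_sm hr₀ hroot
  have hg₀ : g 0 = r₀ := hsm.apply_eq_of_leftInvOn sm_self hmaps hinv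
  have hcont : ContinuousWithinAt g (Ioi 0) 0 :=
    (hsm.continuousOn_of_leftInvOn sm_self hmaps hinv 0 self_mem_Ici).mono Ioi_subset_Ici_self
  have hg_lim : Tendsto g (𝓝[>] 0) (𝓝 r₀) := hg₀ ▸ hcont.tendsto
  have hderiv : ∀ s ∈ Ioi (0 : ℝ), HasDerivAt (fun s => Hm m (g s))
      (6 * m / g s ^ 3 - 2 / g s ^ 2) s := fun s hs =>
    hasDerivAt_Hm_comp_of_leftInvOn hr₀ hroot hmaps hinv hs
  have hψ : ContinuousAt (fun r => 6 * m / r ^ 3 - 2 / r ^ 2) r₀ := by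
    fun_prop (disch := positivity)
  have hψ₀ : 6 * m / r₀ ^ 3 - 2 / r₀ ^ 2 = 3 + 1 / r₀ ^ 2 := by
    field_simp
    linear_combination (-3) * hroot
  refine hasDerivWithinAt_Ici_of_tendsto_deriv (s := Ioi 0)
    (fun s hs => (hderiv s hs).differentiableAt.differentiableWithinAt)
    ((continuousAt_Hm (hg₀ ▸ hr₀.ne')).comp_continuousWithinAt hcont) self_mem_nhdsWithin ?_
  rw [← hψ₀]
  refine (hψ.tendsto.comp hg_lim).congr' ?_
  filter_upwards [self_mem_nhdsWithin] with s hs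
  exact (hderiv s hs).deriv.symm

end SAdS

theorem penrose_stmt14_general (m r₀ : ℝ) (hr₀ : 0 < r₀)
    (hroot : r₀ ^ 3 + r₀ = 2 * m) (rm : ℝ → ℝ)
    (hinv₂ : ∀ s : ℝ, 0 ≤ s → r₀ ≤ rm s ∧ sm m r₀ (rm s) = s) :
    (∀ s : ℝ, 0 < s →
      HasDerivAt (fun s => Hm m (rm s)) (6 * m / (rm s) ^ 3 - 2 / (rm s) ^ 2) s ∧
      6 * m / (rm s) ^ 3 - 2 / (rm s) ^ 2 = (2 / (rm s) ^ 3) * (3 * m - rm s)) ∧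
    (HasDerivWithinAt (fun s => Hm m (rm s)) (3 + 1 / r₀ ^ 2) (Set.Ici 0) 0 ∧
      0 < 3 + 1 / r₀ ^ 2) ∧
    ∀ s : ℝ, 0 < s →
      (rm s < 3 * m → 0 < 6 * m / (rm s) ^ 3 - 2 / (rm s) ^ 2) ∧
      (3 * m < rm s → 6 * m / (rm s) ^ 3 - 2 / (rm s) ^ 2 < 0) := by
  have hmaps : MapsTo rm (Ici 0) (Ici r₀) := fun s hs => (hinv₂ s hs).1
  have hinv : LeftInvOn (sm m r₀) rm (Ici 0) := fun s hs => (hinv₂ s hs).2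
  have hrm : ∀ s, 0 < s → 0 < rm s := fun s hs =>
    hr₀.trans (hinv.lt_apply_of_mapsTo_Ici SAdS.sm_self hmaps hs)
  refine ⟨fun s hs => ⟨SAdS.hasDerivAt_Hm_comp_of_leftInvOn hr₀ hroot hmaps hinv hs,
      SAdS.six_mul_div_cube_sub_two_div_sq (hrm s hs).ne'⟩,
    ⟨SAdS.hasDerivWithinAt_Hm_comp_of_leftInvOn hr₀ hroot hmaps hinv, by positivity⟩,
    fun s hs => ?_⟩
  have hcoef : 0 < 2 / rm s ^ 3 := by have := hrm s hs; positivity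
  rw [SAdS.six_mul_div_cube_sub_two_div_sq (hrm s hs).ne']
  exact ⟨fun h => mul_pos hcoef (by linarith),
    fun h => mul_neg_of_pos_of_neg hcoef (by linarith)⟩

/-- For every `m > 0`, the mean curvature along the arclength coordinate,
`h(s) := H_m(r_m(s))`, satisfies: `h` is differentiable on `(0,∞)` with
`h′(s) = 6m/r_m(s)³ − 2/r_m(s)² = (2/r_m(s)³)(3m − r_m(s))`; the one-sided derivative of
`h` at `s = 0` exists and equals `3 + 1/r₀(m)²`, which is strictly positive; and
`h′(s) > 0` when `r_m(s) < 3m` while `h′(s) < 0` when `r_m(s) > 3m`.  Here `r₀` is the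
unique positive real with `r₀³ + r₀ = 2m` and `r_m` is the inverse of `s_m`, as
expressed by the hypotheses `hinv₁`, `hinv₂`. -/
theorem penrose_stmt14 (m r₀ : ℝ) (hm : 0 < m) (hr₀ : 0 < r₀)
    (hroot : r₀ ^ 3 + r₀ = 2 * m) (rm : ℝ → ℝ)
    (hinv₁ : ∀ r : ℝ, r₀ ≤ r → rm (sm m r₀ r) = r)
    (hinv₂ : ∀ s : ℝ, 0 ≤ s → r₀ ≤ rm s ∧ sm m r₀ (rm s) = s) :
    (∀ s : ℝ, 0 < s →
      HasDerivAt (fun s => Hm m (rm s)) (6 * m / (rm s) ^ 3 - 2 / (rm s) ^ 2) s ∧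
      6 * m / (rm s) ^ 3 - 2 / (rm s) ^ 2 = (2 / (rm s) ^ 3) * (3 * m - rm s)) ∧
    (HasDerivWithinAt (fun s => Hm m (rm s)) (3 + 1 / r₀ ^ 2) (Set.Ici 0) 0 ∧
      0 < 3 + 1 / r₀ ^ 2) ∧
    ∀ s : ℝ, 0 < s →
      (rm s < 3 * m → 0 < 6 * m / (rm s) ^ 3 - 2 / (rm s) ^ 2) ∧
      (3 * m < rm s → 6 * m / (rm s) ^ 3 - 2 / (rm s) ^ 2 < 0) :=
  penrose_stmt14_general m r₀ hr₀ hroot rm hinv₂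
end
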